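/- arXiv:2308.08291 — 2 statements merged into one kernel-verified Lean document; each statement's English description precedes it below -/
import Mathlib

section
/- (Instantaneous robust satisficing regret bound — deterministic core of Theorem 1.) Let M be a symmetric positive definite real n×n matrix, τ ∈ ℝ, w_t, w* ∈ Δ_n, β ≥ 0, and let X be a finite nonempty set with vectors f_x, u_x, σ_x ∈ ℝ^n for each x ∈ X satisfying componentwise f_x ≤ u_x ≤ f_x + 2βσ_x and σ_x ≥ 0. Assume there exists x̂ ∈ X with ⟨w_t, f_{x̂}⟩ ≥ τ. For x with ⟨w_t, f_x⟩ ≥ τ define κ(x) := max{ sup_{w ∈ Δ_n, w ≠ w_t} (τ − ⟨w, f_x⟩)/‖w − w_t‖_M , 0 }, and κ(x) := +∞ otherwise; for x with ⟨w_t, u_x⟩ ≥ τ define κ̂(x) := sup_{w ∈ Δ_n, w ≠ w_t} (τ − ⟨w, u_x⟩)/‖w − w_t‖_M, and κ̂(x) := +∞ otherwise. Let x_t ∈ argmin_{x ∈ X} κ̂(x) and κ* := min_{x ∈ X} κ(x). Then τ − κ*‖w* − w_t‖_M − ⟨w*, f_{x_t}⟩ ≤ 2β⟨w*, σ_{x_t}⟩.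 -/
/-! Since `f ≤ u`, the estimated fragility of every action is at most its true fragility, so the
minimiser `x_t` has `κ̂(x_t) ≤ κ*`; `κ*` is finite because a feasible action exists and the
supremand is bounded by Cauchy–Schwarz in the `M`-inner product. Unfolding `κ̂(x_t) ≤ κ*` at
`w*` gives `τ - κ* ‖w* - w_t‖_M ≤ ⟨w*, u_{x_t}⟩ ≤ ⟨w*, f_{x_t}⟩ + 2β⟨w*, σ_{x_t}⟩`. -/

open Matrix

/-- The MMD (maximum mean discrepancy) "norm" `‖w‖_M = √(wᵀ M w)` associated with a
kernel matrix `M`. -/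
noncomputable def mmd {n : ℕ} (M : Matrix (Fin n) (Fin n) ℝ) (w : Fin n → ℝ) : ℝ :=
  Real.sqrt (w ⬝ᵥ M.mulVec w)

/-- The supremum (in the extended reals) appearing in the definitions of the fragility and
of the estimated fragility: `sup_{w ∈ Δ_n, w ≠ w_t} (τ - ⟨w, v⟩)/‖w - w_t‖_M`. -/
noncomputable def fragSup {n : ℕ} (M : Matrix (Fin n) (Fin n) ℝ) (τ : ℝ)
    (wt v : Fin n → ℝ) : EReal :=
  ⨆ w : {w : Fin n → ℝ // w ∈ stdSimplex ℝ (Fin n) ∧ w ≠ wt},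
    (((τ - (w : Fin n → ℝ) ⬝ᵥ v) / mmd M ((w : Fin n → ℝ) - wt) : ℝ) : EReal)

/-- The (true) fragility `κ_τ(x)` of an action whose reward vector is `v`:
`max (sup_{w ∈ Δ_n, w ≠ w_t} (τ - ⟨w, v⟩)/‖w - w_t‖_M) 0` if `⟨w_t, v⟩ ≥ τ`, and `+∞`
otherwise. -/
noncomputable def fragility {n : ℕ} (M : Matrix (Fin n) (Fin n) ℝ) (τ : ℝ)
    (wt v : Fin n → ℝ) : EReal :=
  if τ ≤ wt ⬝ᵥ v then max (fragSup M τ wt v) 0 else ⊤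

/-- The estimated fragility `κ̂_τ(x)` of an action whose upper-confidence-bound vector is
`u`: `sup_{w ∈ Δ_n, w ≠ w_t} (τ - ⟨w, u⟩)/‖w - w_t‖_M` if `⟨w_t, u⟩ ≥ τ`, and `+∞`
otherwise. -/
noncomputable def estFragility {n : ℕ} (M : Matrix (Fin n) (Fin n) ℝ) (τ : ℝ)
    (wt u : Fin n → ℝ) : EReal :=
  if τ ≤ wt ⬝ᵥ u then fragSup M τ wt u else ⊤

section Mmd

variable {n : ℕ} {M : Matrix (Fin n) (Fin n) ℝ}

theorem dotProduct_mulVec_le_mmd_mul_mmd (hM : M.PosSemidef) (a b : Fin n → ℝ) :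
    a ⬝ᵥ M *ᵥ b ≤ mmd M a * mmd M b := by
  let _ := M.toSeminormedAddCommGroup hM
  let _ := M.toInnerProductSpace hM
  have h : (M *ᵥ b) ⬝ᵥ a ≤ √((M *ᵥ a) ⬝ᵥ a) * √((M *ᵥ b) ⬝ᵥ b) := real_inner_le_norm a b
  simpa only [mmd, dotProduct_comm (M *ᵥ _)] using h

theorem mmd_pos (hM : M.PosDef) {a : Fin n → ℝ} (ha : a ≠ 0) : 0 < mmd M a :=
  Real.sqrt_pos.mpr (by simpa using hM.re_dotProduct_pos ha)

theorem mmd_sub_comm (M : Matrix (Fin n) (Fin n) ℝ) (a b : Fin n → ℝ) :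
    mmd M (a - b) = mmd M (b - a) := by
  rw [mmd, mmd, ← neg_sub, mulVec_neg, dotProduct_neg, neg_dotProduct, neg_neg]

end Mmd

section Fragility

variable {n : ℕ} {M : Matrix (Fin n) (Fin n) ℝ} {τ : ℝ} {wt : Fin n → ℝ}

theorem div_mmd_le_fragSup {v w : Fin n → ℝ} (hw : w ∈ stdSimplex ℝ (Fin n)) (hne : w ≠ wt) :
    (((τ - w ⬝ᵥ v) / mmd M (w - wt) : ℝ) : EReal) ≤ fragSup M τ wt v :=
  le_iSup (fun w : {w : Fin n → ℝ // w ∈ stdSimplex ℝ (Fin n) ∧ w ≠ wt} =>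
    (((τ - (w : Fin n → ℝ) ⬝ᵥ v) / mmd M ((w : Fin n → ℝ) - wt) : ℝ) : EReal)) ⟨w, hw, hne⟩

theorem fragSup_le_mmd_inv_mulVec (hM : M.PosDef) {v : Fin n → ℝ} (hv : τ ≤ wt ⬝ᵥ v) :
    fragSup M τ wt v ≤ ((mmd M (M⁻¹ *ᵥ v) : ℝ) : EReal) := by
  refine iSup_le fun ⟨w, _, hne⟩ => EReal.coe_le_coe_iff.mpr ?_
  rw [div_le_iff₀ (mmd_pos hM (sub_ne_zero.mpr hne)), mul_comm, ← mmd_sub_comm]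
  have hMv : M *ᵥ (M⁻¹ *ᵥ v) = v := by
    rw [mulVec_mulVec, mul_nonsing_inv _ (isUnit_iff_ne_zero.mpr hM.det_pos.ne'), one_mulVec]
  calc τ - w ⬝ᵥ v ≤ (wt - w) ⬝ᵥ v := by rw [sub_dotProduct]; linarith
    _ = (wt - w) ⬝ᵥ M *ᵥ (M⁻¹ *ᵥ v) := by rw [hMv]
    _ ≤ _ := dotProduct_mulVec_le_mmd_mul_mmd hM.posSemidef _ _

theorem fragSup_anti {a b : Fin n → ℝ} (hab : a ≤ b) :
    fragSup M τ wt b ≤ fragSup M τ wt a :=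
  iSup_mono fun ⟨_, hw, _⟩ => EReal.coe_le_coe_iff.mpr <|
    div_le_div_of_nonneg_right
      (sub_le_sub_left (dotProduct_le_dotProduct_of_nonneg_left hab hw.1) τ) (Real.sqrt_nonneg _)

theorem fragility_nonneg (v : Fin n → ℝ) : 0 ≤ fragility M τ wt v := by
  unfold fragility
  split_ifs
  exacts [le_max_right _ _, le_top]

theorem fragility_ne_top (hM : M.PosDef) {v : Fin n → ℝ} (hv : τ ≤ wt ⬝ᵥ v) :
    fragility M τ wt v ≠ ⊤ := by
  rw [fragility, if_pos hv]
  exact ne_top_of_le_ne_top (EReal.coe_ne_top _) <|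
    max_le (fragSup_le_mmd_inv_mulVec hM hv) (EReal.coe_nonneg.mpr (Real.sqrt_nonneg _))

theorem estFragility_le_fragility (hwt : wt ∈ stdSimplex ℝ (Fin n)) {f u : Fin n → ℝ}
    (hfu : f ≤ u) : estFragility M τ wt u ≤ fragility M τ wt f := by
  unfold estFragility fragility
  by_cases hf : τ ≤ wt ⬝ᵥ f
  · rw [if_pos (hf.trans (dotProduct_le_dotProduct_of_nonneg_left hfu hwt.1)), if_pos hf]
    exact (fragSup_anti hfu).trans (le_max_left _ _)
  · rw [if_neg hf]
    exact le_top

theorem sub_mul_mmd_le_dotProduct (hM : M.PosDef) {u w : Fin n → ℝ} {k : ℝ}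
    (hk : estFragility M τ wt u ≤ k) (hw : w ∈ stdSimplex ℝ (Fin n)) :
    τ - k * mmd M (w - wt) ≤ w ⬝ᵥ u := by
  have hu : τ ≤ wt ⬝ᵥ u := by
    by_contra h
    rw [estFragility, if_neg h, top_le_iff] at hk
    exact EReal.coe_ne_top k hk
  rw [estFragility, if_pos hu] at hk
  rcases eq_or_ne w wt with rfl | hne
  · simpa [mmd] using hu
  · have h := EReal.coe_le_coe_iff.mp ((div_mmd_le_fragSup hw hne).trans hk)
    rw [div_le_iff₀ (mmd_pos hM (sub_ne_zero.mpr hne))] at h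
    linarith

end Fragility

theorem instantaneous_rs_regret_bound_general {n : ℕ} (M : Matrix (Fin n) (Fin n) ℝ)
    (hM : M.PosDef) (τ : ℝ) (wt wstar : Fin n → ℝ)
    (hwt : wt ∈ stdSimplex ℝ (Fin n)) (hwstar : wstar ∈ stdSimplex ℝ (Fin n))
    (β : ℝ)
    {X : Type*}
    (f u σ : X → Fin n → ℝ)
    (hfu : ∀ x i, f x i ≤ u x i)
    (huf : ∀ x i, u x i ≤ f x i + 2 * β * σ x i)
    (hfeas : ∃ xhat : X, τ ≤ wt ⬝ᵥ f xhat)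
    (xt : X) (hxt : ∀ x : X, estFragility M τ wt (u xt) ≤ estFragility M τ wt (u x)) :
    τ - (⨅ x : X, fragility M τ wt (f x)).toReal * mmd M (wstar - wt) - wstar ⬝ᵥ f xt
      ≤ 2 * β * (wstar ⬝ᵥ σ xt) := by
  set κstar := ⨅ x : X, fragility M τ wt (f x)
  obtain ⟨xhat, hxhat⟩ := hfeas
  have hκ_ne_top : κstar ≠ ⊤ :=
    ne_top_of_le_ne_top (fragility_ne_top hM hxhat) (iInf_le _ xhat)
  have hκ_ne_bot : κstar ≠ ⊥ :=
    ne_bot_of_le_ne_bot EReal.zero_ne_bot (le_iInf fun x => fragility_nonneg (f x))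
  have hest : estFragility M τ wt (u xt) ≤ (κstar.toReal : EReal) := by
    rw [EReal.coe_toReal hκ_ne_top hκ_ne_bot]
    exact le_iInf fun x => (hxt x).trans (estFragility_le_fragility hwt (hfu x))
  have hucb : wstar ⬝ᵥ u xt ≤ wstar ⬝ᵥ f xt + 2 * β * (wstar ⬝ᵥ σ xt) := by
    rw [← smul_eq_mul, ← dotProduct_smul, ← dotProduct_add]
    exact dotProduct_le_dotProduct_of_nonneg_left (huf xt) hwstar.1
  linarith [sub_mul_mmd_le_dotProduct hM hest hwstar]

/-- **instantaneous robust satisficing regret bound — deterministic core of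
Theorem 1.** With `f_x ≤ u_x ≤ f_x + 2βσ_x` componentwise, `σ_x ≥ 0`, some action feasible
under the reference distribution `w_t`, `x_t` a minimizer of the estimated fragility and
`κ* = min_x κ(x)` the minimum fragility, we have
`τ - κ*·‖w* - w_t‖_M - ⟨w*, f_{x_t}⟩ ≤ 2β⟨w*, σ_{x_t}⟩`. -/
theorem instantaneous_rs_regret_bound {n : ℕ} (M : Matrix (Fin n) (Fin n) ℝ)
    (hM : M.PosDef) (τ : ℝ) (wt wstar : Fin n → ℝ)
    (hwt : wt ∈ stdSimplex ℝ (Fin n)) (hwstar : wstar ∈ stdSimplex ℝ (Fin n))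
    (β : ℝ) (hβ : 0 ≤ β)
    {X : Type*} [Fintype X] [Nonempty X]
    (f u σ : X → Fin n → ℝ)
    (hfu : ∀ x i, f x i ≤ u x i)
    (huf : ∀ x i, u x i ≤ f x i + 2 * β * σ x i)
    (hσ : ∀ x i, 0 ≤ σ x i)
    (hfeas : ∃ xhat : X, τ ≤ wt ⬝ᵥ f xhat)
    (xt : X) (hxt : ∀ x : X, estFragility M τ wt (u xt) ≤ estFragility M τ wt (u x)) :
    τ - (⨅ x : X, fragility M τ wt (f x)).toReal * mmd M (wstar - wt) - wstar ⬝ᵥ f xt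
      ≤ 2 * β * (wstar ⬝ᵥ σ xt) :=
  instantaneous_rs_regret_bound_general M hM τ wt wstar hwt hwstar β f u σ hfu huf hfeas xt hxt
end

section
/- (Concentration lemma for nonnegative bounded adapted processes.) Let (Ω, 𝔉, P) be a probability space with a filtration (𝔉_t)_{t≥0}, and let (S_t)_{t≥1} be a stochastic process adapted to (𝔉_t) with 0 ≤ S_t ≤ B almost surely for some constant B ≥ 1. Let m_t := E[S_t | 𝔉_{t−1}]. Then for any T ≥ 1 and any δ ∈ (0,1), with probability at least 1 − δ, Σ_{t=1}^T m_t ≤ 2Σ_{t=1}^T S_t + 8B log(6B/δ). -/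
/-!
Write `m_t = E[S_t | ℱ_{t-1}]` and `Z_n = Σ_{t ≤ n} (m_t / (2B) - S_t / B)`. Since
`exp (-y) ≤ 1 - y / 2 ≤ exp (-y / 2)` for `y ∈ [0, 1]`, conditioning on `ℱ_{t-1}` shows that
`exp Z_n` is a supermartingale, so `E[exp Z_T] ≤ 1`. By Markov's inequality `Z_T < log (1 / δ)`
with probability at least `1 - δ`, and on that event
`Σ m_t < 2 Σ S_t + 2B log (1 / δ) ≤ 2 Σ S_t + 8B log (6B / δ)`.
-/

open MeasureTheory Finset ProbabilityTheory Real

theorem Real.exp_neg_le_one_sub_half {y : ℝ} (h0 : 0 ≤ y) (h1 : y ≤ 1) :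
    exp (-y) ≤ 1 - y / 2 := by
  have hexp : 1 + y ≤ exp y := by linarith [add_one_le_exp y]
  have hinv : exp (-y) * exp y = 1 := by rw [← exp_add, neg_add_cancel, exp_zero]
  nlinarith [exp_pos (-y), mul_nonneg h0 (sub_nonneg.2 h1)]

section

variable {Ω : Type*} {m0 : MeasurableSpace Ω} {P : Measure Ω} {B : ℝ}

theorem integrable_of_ae_nonneg_le [IsFiniteMeasure P] {X : Ω → ℝ}
    (hX : AEStronglyMeasurable X P) (hXB : ∀ᵐ ω ∂P, 0 ≤ X ω ∧ X ω ≤ B) : Integrable X P :=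
  .of_bound hX B <| by
    filter_upwards [hXB] with ω hω
    rw [norm_eq_abs, abs_of_nonneg hω.1]
    exact hω.2

theorem condExp_ae_nonneg_le [IsFiniteMeasure P] {X : Ω → ℝ} (hX : AEStronglyMeasurable X P)
    (hXB : ∀ᵐ ω ∂P, 0 ≤ X ω ∧ X ω ≤ B) {m : MeasurableSpace Ω} (hm : m ≤ m0) :
    ∀ᵐ ω ∂P, 0 ≤ P[X | m] ω ∧ P[X | m] ω ≤ B := by
  have hnonneg : 0 ≤ᵐ[P] P[X | m] := condExp_nonneg (hXB.mono fun _ h => h.1)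
  have hle : P[X | m] ≤ᵐ[P] P[fun _ => B | m] :=
    condExp_mono (integrable_of_ae_nonneg_le hX hXB) (integrable_const B)
      (hXB.mono fun _ h => h.2)
  rw [condExp_const hm] at hle
  filter_upwards [hnonneg, hle] with ω h0 h1
  exact ⟨h0, h1⟩

theorem condExp_exp_neg_div_le [IsFiniteMeasure P] {X : Ω → ℝ} (hX : AEStronglyMeasurable X P)
    (hB : 0 < B) (hXB : ∀ᵐ ω ∂P, 0 ≤ X ω ∧ X ω ≤ B) {m : MeasurableSpace Ω} (hm : m ≤ m0) :
    P[fun ω => exp (-(X ω / B)) | m] ≤ᵐ[P] fun ω => exp (-(P[X | m] ω / (2 * B))) := by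
  have hXint := integrable_of_ae_nonneg_le hX hXB
  have hlin : (fun ω => 1 - X ω / (2 * B)) = (fun _ => (1 : ℝ)) - (2 * B)⁻¹ • X := by
    funext ω
    simp only [Pi.sub_apply, Pi.smul_apply, smul_eq_mul]
    ring
  have hlin_int : Integrable (fun ω => 1 - X ω / (2 * B)) P := by
    rw [hlin]
    exact (integrable_const 1).sub (hXint.smul _)
  have hexp_int : Integrable (fun ω => exp (-(X ω / B))) P := by
    refine .of_bound (by fun_prop) 1 ?_
    filter_upwards [hXB] with ω hω
    rw [norm_of_nonneg (exp_pos _).le, exp_le_one_iff, neg_nonpos]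
    exact div_nonneg hω.1 hB.le
  have hpointwise : (fun ω => exp (-(X ω / B))) ≤ᵐ[P] fun ω => 1 - X ω / (2 * B) := by
    filter_upwards [hXB] with ω hω
    have := exp_neg_le_one_sub_half (div_nonneg hω.1 hB.le) ((div_le_one hB).2 hω.2)
    rwa [div_div, mul_comm B] at this
  have hcond_lin : P[fun ω => 1 - X ω / (2 * B) | m] =ᵐ[P] fun ω => 1 - P[X | m] ω / (2 * B) := by
    rw [hlin]
    filter_upwards [condExp_sub (integrable_const 1) (hXint.smul (2 * B)⁻¹) m,
      condExp_smul (μ := P) (2 * B)⁻¹ X m] with ω hsub hsmul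
    rw [hsub, Pi.sub_apply, hsmul, condExp_const hm, Pi.smul_apply, smul_eq_mul, inv_mul_eq_div]
  filter_upwards [condExp_mono hexp_int hlin_int hpointwise, hcond_lin] with ω hmono hlin_eq
  rw [hlin_eq] at hmono
  linarith [add_one_le_exp (-(P[X | m] ω / (2 * B)))]

theorem measure_ge_le_exp_neg_of_integral_exp_le_one [IsFiniteMeasure P] {X : Ω → ℝ}
    (hint : Integrable (fun ω => exp (X ω)) P) (hX : ∫ ω, exp (X ω) ∂P ≤ 1) (ε : ℝ) :
    P {ω | ε ≤ X ω} ≤ ENNReal.ofReal (exp (-ε)) := by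
  rw [ENNReal.le_ofReal_iff_toReal_le (measure_ne_top _ _) (exp_pos _).le]
  have hchernoff := measure_ge_le_exp_mul_mgf ε zero_le_one (by simpa only [one_mul] using hint)
  simp only [mgf, one_mul, neg_one_mul] at hchernoff
  calc (P {ω | ε ≤ X ω}).toReal ≤ exp (-ε) * ∫ ω, exp (X ω) ∂P := hchernoff
    _ ≤ exp (-ε) := mul_le_of_le_one_right (exp_pos _).le hX

theorem ofReal_one_sub_le_measure_of_measure_compl_le [IsProbabilityMeasure P] {s : Set Ω}
    {δ : ℝ} (hδ : 0 ≤ δ) (hs : P sᶜ ≤ ENNReal.ofReal δ) : ENNReal.ofReal (1 - δ) ≤ P s := by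
  rw [ENNReal.ofReal_sub _ hδ, ENNReal.ofReal_one, tsub_le_iff_right]
  calc 1 = P (s ∪ sᶜ) := by rw [Set.union_compl_self, measure_univ]
    _ ≤ P s + P sᶜ := measure_union_le s sᶜ
    _ ≤ P s + ENNReal.ofReal δ := by gcongr

end

theorem neg_log_le_of_lt_two_mul_add {a s B δ : ℝ} (hB : 1 ≤ B) (hδ : δ ∈ Set.Ioo (0 : ℝ) 1)
    (h : 2 * s + 8 * B * log (6 * B / δ) < a) : -log δ ≤ a / (2 * B) - s / B := by
  obtain ⟨hδ0, hδ1⟩ := hδ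
  have hlog : -log δ ≤ log (6 * B / δ) := by
    rw [← log_inv, inv_eq_one_div]
    exact log_le_log (by positivity) (div_le_div_of_nonneg_right (by linarith) hδ0.le)
  have hlog_nonneg : 0 ≤ -log δ := neg_nonneg.2 (log_nonpos hδ0.le hδ1.le)
  have hkey : 4 * log (6 * B / δ) < a / (2 * B) - s / B := by
    rw [div_sub_div _ _ (by positivity) (by positivity), lt_div_iff₀ (by positivity)]
    nlinarith
  linarith

noncomputable def compensatedSum {Ω : Type*} {m0 : MeasurableSpace Ω} (P : Measure Ω)
    (ℱ : Filtration ℕ m0) (S : ℕ → Ω → ℝ) (B : ℝ) (n : ℕ) (ω : Ω) : ℝ :=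
  ∑ t ∈ Icc 1 n, (P[S t | ℱ (t - 1)] ω / (2 * B) - S t ω / B)

namespace compensatedSum

variable {Ω : Type*} {m0 : MeasurableSpace Ω} {P : Measure Ω} {ℱ : Filtration ℕ m0}
  {S : ℕ → Ω → ℝ} {B : ℝ}

theorem eq_sub (n : ℕ) (ω : Ω) :
    compensatedSum P ℱ S B n ω =
      (∑ t ∈ Icc 1 n, P[S t | ℱ (t - 1)] ω) / (2 * B) - (∑ t ∈ Icc 1 n, S t ω) / B := by
  simp only [compensatedSum, sum_sub_distrib, sum_div]

theorem succ (n : ℕ) (ω : Ω) :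
    compensatedSum P ℱ S B (n + 1) ω =
      compensatedSum P ℱ S B n ω + P[S (n + 1) | ℱ n] ω / (2 * B) - S (n + 1) ω / B := by
  rw [compensatedSum, sum_Icc_succ_top (by omega), Nat.add_sub_cancel, ← add_sub_assoc]
  rfl

theorem stronglyMeasurable (hS : StronglyAdapted ℱ S) (n : ℕ) :
    StronglyMeasurable[ℱ n] (compensatedSum P ℱ S B n) := by
  refine Finset.stronglyMeasurable_fun_sum _ fun t ht => ?_
  have htn : t ≤ n := (mem_Icc.1 ht).2
  have hm : StronglyMeasurable[ℱ n] P[S t | ℱ (t - 1)] :=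
    stronglyMeasurable_condExp.mono (ℱ.mono (by omega))
  have hSt : StronglyMeasurable[ℱ n] (S t) := (hS t).mono (ℱ.mono htn)
  fun_prop

variable [IsProbabilityMeasure P]

theorem ae_le_div_two (hS : StronglyAdapted ℱ S) (hB : 0 < B)
    (hSB : ∀ t, ∀ᵐ ω ∂P, 0 ≤ S t ω ∧ S t ω ≤ B) (n : ℕ) :
    ∀ᵐ ω ∂P, compensatedSum P ℱ S B n ω ≤ n / 2 := by
  have hcond : ∀ t, ∀ᵐ ω ∂P, 0 ≤ P[S t | ℱ (t - 1)] ω ∧ P[S t | ℱ (t - 1)] ω ≤ B := fun t =>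
    condExp_ae_nonneg_le ((hS t).mono (ℱ.le t)).aestronglyMeasurable (hSB t) (ℱ.le _)
  filter_upwards [ae_all_iff.2 hSB, ae_all_iff.2 hcond] with ω hSω hcondω
  calc compensatedSum P ℱ S B n ω ≤ ∑ t ∈ Icc 1 n, (1 / 2 : ℝ) := by
        refine sum_le_sum fun t _ => ?_
        have hm : P[S t | ℱ (t - 1)] ω / (2 * B) ≤ 1 / 2 := by
          rw [div_le_iff₀ (by positivity)]; linarith [(hcondω t).2]
        linarith [div_nonneg (hSω t).1 hB.le]
    _ = n / 2 := by
        simp only [one_div, sum_const, Nat.card_Icc, add_tsub_cancel_right, nsmul_eq_mul]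
        ring

theorem integrable_exp (hS : StronglyAdapted ℱ S) (hB : 0 < B)
    (hSB : ∀ t, ∀ᵐ ω ∂P, 0 ≤ S t ω ∧ S t ω ≤ B) (n : ℕ) :
    Integrable (fun ω => exp (compensatedSum P ℱ S B n ω)) P := by
  refine .of_bound (continuous_exp.comp_stronglyMeasurable
    ((stronglyMeasurable hS n).mono (ℱ.le n))).aestronglyMeasurable (exp (n / 2)) ?_
  filter_upwards [ae_le_div_two hS hB hSB n] with ω hω
  rw [norm_of_nonneg (exp_pos _).le]
  exact exp_le_exp.2 hω

/-- Pulling the `ℱ n`-measurable factor out of `E[exp Z_{n+1} | ℱ n]` leaves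
`E[exp (-S (n + 1) / B) | ℱ n]`, which `condExp_exp_neg_div_le` compensates. -/
theorem integral_exp_succ_le (hS : StronglyAdapted ℱ S) (hB : 0 < B)
    (hSB : ∀ t, ∀ᵐ ω ∂P, 0 ≤ S t ω ∧ S t ω ≤ B) (n : ℕ) :
    ∫ ω, exp (compensatedSum P ℱ S B (n + 1) ω) ∂P ≤
      ∫ ω, exp (compensatedSum P ℱ S B n ω) ∂P := by
  set m := P[S (n + 1) | ℱ n]
  set F : Ω → ℝ := fun ω => exp (compensatedSum P ℱ S B n ω + m ω / (2 * B))
  set G : Ω → ℝ := fun ω => exp (-(S (n + 1) ω / B))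
  have hFG : (fun ω => exp (compensatedSum P ℱ S B (n + 1) ω)) = F * G := by
    funext ω
    simp only [F, G, Pi.mul_apply, ← exp_add, succ, m]
    ring_nf
  have hF_eq : ∀ ω, F ω * exp (-(m ω / (2 * B))) = exp (compensatedSum P ℱ S B n ω) := by
    intro ω
    rw [← exp_add, add_neg_cancel_right]
  have hF : StronglyMeasurable[ℱ n] F := by
    have hZ := stronglyMeasurable (P := P) (B := B) hS n
    have hm : StronglyMeasurable[ℱ n] m := stronglyMeasurable_condExp
    fun_prop
  have hS_meas : AEStronglyMeasurable (S (n + 1)) P :=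
    ((hS (n + 1)).mono (ℱ.le _)).aestronglyMeasurable
  have hG : Integrable G P :=
    .of_bound (by fun_prop) 1 <| by
      filter_upwards [hSB (n + 1)] with ω hω
      rw [norm_of_nonneg (exp_pos _).le, exp_le_one_iff, neg_nonpos]
      exact div_nonneg hω.1 hB.le
  have hFG_int : Integrable (F * G) P := hFG ▸ integrable_exp hS hB hSB (n + 1)
  have hpull : P[F * G | ℱ n] =ᵐ[P] F * P[G | ℱ n] :=
    condExp_mul_of_stronglyMeasurable_left hF hFG_int hG
  calc ∫ ω, exp (compensatedSum P ℱ S B (n + 1) ω) ∂P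
      = ∫ ω, P[F * G | ℱ n] ω ∂P := by rw [hFG, integral_condExp (ℱ.le n)]
    _ = ∫ ω, F ω * P[G | ℱ n] ω ∂P := integral_congr_ae hpull
    _ ≤ ∫ ω, F ω * exp (-(m ω / (2 * B))) ∂P := by
        refine integral_mono_ae (integrable_condExp.congr hpull) ?_ ?_
        · simpa only [hF_eq] using integrable_exp hS hB hSB n
        · filter_upwards [condExp_exp_neg_div_le hS_meas hB (hSB (n + 1)) (ℱ.le n)] with ω hω
          exact mul_le_mul_of_nonneg_left hω (exp_pos _).le
    _ = ∫ ω, exp (compensatedSum P ℱ S B n ω) ∂P := by simp only [hF_eq]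

theorem integral_exp_le_one (hS : StronglyAdapted ℱ S) (hB : 0 < B)
    (hSB : ∀ t, ∀ᵐ ω ∂P, 0 ≤ S t ω ∧ S t ω ≤ B) (n : ℕ) :
    ∫ ω, exp (compensatedSum P ℱ S B n ω) ∂P ≤ 1 := by
  induction n with
  | zero => simp [compensatedSum]
  | succ n ih => exact (integral_exp_succ_le hS hB hSB n).trans ih

end compensatedSum

theorem concentration_adapted_process_general {Ω : Type*} {m0 : MeasurableSpace Ω}
    (P : Measure Ω) [IsProbabilityMeasure P]
    (ℱ : Filtration ℕ m0) (S : ℕ → Ω → ℝ)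
    (hadapted : StronglyAdapted ℱ S)
    (B : ℝ) (hB : 1 ≤ B)
    (hS : ∀ t, ∀ᵐ ω ∂P, 0 ≤ S t ω ∧ S t ω ≤ B)
    (T : ℕ) (δ : ℝ) (hδ : δ ∈ Set.Ioo (0 : ℝ) 1) :
    ENNReal.ofReal (1 - δ) ≤
      P {ω | ∑ t ∈ Finset.Icc 1 T, (P[S t | ℱ (t - 1)]) ω
          ≤ 2 * ∑ t ∈ Finset.Icc 1 T, S t ω + 8 * B * Real.log (6 * B / δ)} := by
  have hB0 : 0 < B := by linarith
  refine ofReal_one_sub_le_measure_of_measure_compl_le hδ.1.le ?_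
  calc P {ω | _}ᶜ ≤ P {ω | -log δ ≤ compensatedSum P ℱ S B T ω} := by
        refine measure_mono fun ω hω => ?_
        rw [Set.mem_ofPred_eq, compensatedSum.eq_sub]
        exact neg_log_le_of_lt_two_mul_add hB hδ (not_le.1 hω)
    _ ≤ ENNReal.ofReal (exp (- -log δ)) :=
        measure_ge_le_exp_neg_of_integral_exp_le_one
          (compensatedSum.integrable_exp hadapted hB0 hS T)
          (compensatedSum.integral_exp_le_one hadapted hB0 hS T) _
    _ = ENNReal.ofReal δ := by rw [neg_neg, exp_log hδ.1]

/-- **concentration lemma for nonnegative bounded adapted processes.**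
Let `(S_t)` be adapted to a filtration `(ℱ_t)`, with `0 ≤ S_t ≤ B` a.s. for a constant
`B ≥ 1`, and let `m_t = E[S_t | ℱ_{t-1}]`. Then for every `T ≥ 1` and `δ ∈ (0,1)`, with
probability at least `1 - δ`,
`Σ_{t=1}^T m_t ≤ 2 Σ_{t=1}^T S_t + 8B log(6B/δ)`. -/
theorem concentration_adapted_process {Ω : Type*} {m0 : MeasurableSpace Ω}
    (P : Measure Ω) [IsProbabilityMeasure P]
    (ℱ : Filtration ℕ m0) (S : ℕ → Ω → ℝ)
    (hadapted : StronglyAdapted ℱ S)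
    (B : ℝ) (hB : 1 ≤ B)
    (hS : ∀ t, ∀ᵐ ω ∂P, 0 ≤ S t ω ∧ S t ω ≤ B)
    (T : ℕ) (hT : 1 ≤ T) (δ : ℝ) (hδ : δ ∈ Set.Ioo (0 : ℝ) 1) :
    ENNReal.ofReal (1 - δ) ≤
      P {ω | ∑ t ∈ Finset.Icc 1 T, (P[S t | ℱ (t - 1)]) ω
          ≤ 2 * ∑ t ∈ Finset.Icc 1 T, S t ω + 8 * B * Real.log (6 * B / δ)} :=
  concentration_adapted_process_general P ℱ S hadapted B hB hS T δ hδ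
end
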